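/- arXiv:2103.12225 — 5 statements merged into one kernel-verified Lean document; each statement's English description precedes it below -/
import Mathlib

section
/- If H is a subgraph of a graph G, then the achromatic arboricity of G is at least the achromatic arboricity of H, i.e., A_α(G) ≥ A_α(H). -/
/-- A partition of the edge set of `G` into `k` nonempty forests (acyclic classes)
such that the union of any two distinct parts contains a cycle. -/
def IsCompleteForestPartition {V : Type*} (G : SimpleGraph V) (k : ℕ)
    (P : Fin k → Set (Sym2 V)) : Prop :=
  (∀ i, (P i).Nonempty) ∧
  (∀ i j, i ≠ j → Disjoint (P i) (P j)) ∧
  (⋃ i, P i) = G.edgeSet ∧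
  (∀ i, (SimpleGraph.fromEdgeSet (P i)).IsAcyclic) ∧
  (∀ i j, i ≠ j → ¬ (SimpleGraph.fromEdgeSet (P i ∪ P j)).IsAcyclic)

/-- The achromatic arboricity of `G`: the largest number of parts in a partition of
`E(G)` into forests such that the union of any two parts contains a cycle. -/
noncomputable def achromaticArboricity {V : Type*} (G : SimpleGraph V) : ℕ :=
  sSup {k | ∃ P : Fin k → Set (Sym2 V), IsCompleteForestPartition G k P}



section Aux
variable {V : Type*}

lemma not_acyclic_mono {G G' : SimpleGraph V} (h : G ≤ G') (hG : ¬ G.IsAcyclic) :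
    ¬ G'.IsAcyclic :=
  fun hac => hG (fun _v c hc => hac (c.mapLe h) (hc.mapLe h))

lemma acyclic_of_subsingleton {s : Set (Sym2 V)} (hs : s.Subsingleton) :
    (SimpleGraph.fromEdgeSet s).IsAcyclic := by
  intro v c hc
  have h3 := hc.three_le_length
  have hn := hc.edges_nodup
  have hlen : c.edges.length = c.length := SimpleGraph.Walk.length_edges c
  match hE : c.edges with
  | [] => simp [hE] at hlen; omega
  | [e1] => simp [hE] at hlen; omega
  | e1 :: e2 :: l =>
      have h1 : e1 ∈ c.edges := by rw [hE]; simp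
      have h2 : e2 ∈ c.edges := by rw [hE]; simp
      have hs1 : e1 ∈ s := ((SimpleGraph.edgeSet_fromEdgeSet s) ▸
        (c.edges_subset_edgeSet h1)).1
      have hs2 : e2 ∈ s := ((SimpleGraph.edgeSet_fromEdgeSet s) ▸
        (c.edges_subset_edgeSet h2)).1
      have : e1 = e2 := hs hs1 hs2
      rw [hE] at hn
      simp [this] at hn

/-- One step of the greedy extension. -/
lemma step {H : SimpleGraph V} {k : ℕ} {P : Fin k → Set (Sym2 V)}
    (hP : IsCompleteForestPartition H k P) {e : Sym2 V} (he : e ∉ H.edgeSet)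
    (hd : ¬ e.IsDiag) :
    ∃ (k' : ℕ) (P' : Fin k' → Set (Sym2 V)), k ≤ k' ∧
      IsCompleteForestPartition (H ⊔ SimpleGraph.fromEdgeSet {e}) k' P' := by
  obtain ⟨hne, hdisj, hunion, hac, hcyc⟩ := hP
  have heP : ∀ i, e ∉ P i := by
    intro i hi
    exact he (hunion ▸ Set.mem_iUnion.2 ⟨i, hi⟩)
  have hedge : (H ⊔ SimpleGraph.fromEdgeSet {e}).edgeSet = H.edgeSet ∪ {e} := by
    rw [SimpleGraph.edgeSet_sup, SimpleGraph.edgeSet_fromEdgeSet]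
    congr 1
    ext x
    simp only [Set.mem_diff, Set.mem_singleton_iff, Set.mem_setOf_eq]
    exact ⟨fun h => h.1, fun h => ⟨h, h ▸ hd⟩⟩
  by_cases hA : ∃ i, (SimpleGraph.fromEdgeSet (P i ∪ {e})).IsAcyclic
  · obtain ⟨i, hi⟩ := hA
    refine ⟨k, Function.update P i (P i ∪ {e}), le_rfl, ?_, ?_, ?_, ?_, ?_⟩
    · intro j
      rcases eq_or_ne j i with rfl | hji
      · simp only [Function.update_self]
        exact (hne j).mono Set.subset_union_left
      · rw [Function.update_of_ne hji]; exact hne j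
    · intro a b hab
      rw [Function.update_apply, Function.update_apply]
      split_ifs with h1 h2 h2
      · exact absurd (h1.trans h2.symm) hab
      · refine Set.disjoint_union_left.2 ⟨hdisj _ _ (fun hh => h2 hh.symm), ?_⟩
        simpa using heP b
      · refine Set.disjoint_union_right.2 ⟨hdisj _ _ (fun hh => h1 hh), ?_⟩
        simpa using heP a
      · exact hdisj a b hab
    · rw [hedge, ← hunion]
      ext x
      simp only [Set.mem_iUnion, Set.mem_union]
      constructor
      · rintro ⟨j, hj⟩
        rcases eq_or_ne j i with rfl | hji
        · rw [Function.update_self] at hj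
          rcases hj with h | h
          · exact Or.inl ⟨j, h⟩
          · exact Or.inr h
        · rw [Function.update_of_ne hji] at hj
          exact Or.inl ⟨j, hj⟩
      · rintro (⟨j, hj⟩ | hx)
        · rcases eq_or_ne j i with rfl | hji
          · exact ⟨j, by rw [Function.update_self]; exact Or.inl hj⟩
          · exact ⟨j, by rw [Function.update_of_ne hji]; exact hj⟩
        · exact ⟨i, by rw [Function.update_self]; exact Or.inr hx⟩
    · intro j
      rcases eq_or_ne j i with rfl | hji
      · rw [Function.update_self]; exact hi
      · rw [Function.update_of_ne hji]; exact hac j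
    · intro a b hab
      have hup : ∀ c, P c ⊆ Function.update P i (P i ∪ {e}) c := by
        intro c
        rcases eq_or_ne c i with rfl | h
        · rw [Function.update_self]; exact Set.subset_union_left
        · rw [Function.update_of_ne h]
      have hsub : P a ∪ P b ⊆ Function.update P i (P i ∪ {e}) a ∪
          Function.update P i (P i ∪ {e}) b := Set.union_subset_union (hup a) (hup b)
      exact not_acyclic_mono (SimpleGraph.fromEdgeSet_mono hsub) (hcyc a b hab)
  · push_neg at hA
    refine ⟨k + 1, Fin.snoc P {e}, Nat.le_succ k, ?_, ?_, ?_, ?_, ?_⟩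
    · intro j
      refine Fin.lastCases ?_ ?_ j
      · simp
      · intro j; simp [Fin.snoc_castSucc]; exact hne j
    · intro a b
      refine Fin.lastCases ?_ ?_ a <;> [skip; intro a'] <;>
        refine Fin.lastCases ?_ ?_ b <;> [skip; intro b'; skip; intro b'] <;> intro hab
      · exact absurd rfl hab
      · simp only [Fin.snoc_last, Fin.snoc_castSucc]
        exact Set.disjoint_singleton_left.2 (heP b')
      · simp only [Fin.snoc_last, Fin.snoc_castSucc]
        exact Set.disjoint_singleton_right.2 (heP a')
      · simp only [Fin.snoc_castSucc]
        exact hdisj a' b' (fun h => hab (by rw [h]))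
    · rw [hedge, ← hunion]
      ext x
      simp only [Set.mem_iUnion, Set.mem_union]
      constructor
      · rintro ⟨j, hj⟩
        rcases Fin.eq_castSucc_or_eq_last j with ⟨j', rfl⟩ | rfl
        · rw [Fin.snoc_castSucc] at hj
          exact Or.inl ⟨j', hj⟩
        · rw [Fin.snoc_last] at hj
          exact Or.inr hj
      · rintro (⟨j, hj⟩ | hx)
        · exact ⟨Fin.castSucc j, by rwa [Fin.snoc_castSucc]⟩
        · exact ⟨Fin.last k, by rwa [Fin.snoc_last]⟩
    · intro j
      refine Fin.lastCases ?_ ?_ j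
      · rw [Fin.snoc_last]
        exact acyclic_of_subsingleton (Set.subsingleton_singleton)
      · intro j; rw [Fin.snoc_castSucc]; exact hac j
    · intro a b
      refine Fin.lastCases ?_ ?_ a <;> [skip; intro a'] <;>
        refine Fin.lastCases ?_ ?_ b <;> [skip; intro b'; skip; intro b'] <;> intro hab
      · exact absurd rfl hab
      · rw [Fin.snoc_last, Fin.snoc_castSucc, Set.union_comm]
        exact hA b'
      · rw [Fin.snoc_last, Fin.snoc_castSucc]
        exact hA a'
      · rw [Fin.snoc_castSucc, Fin.snoc_castSucc]
        exact hcyc a' b' (fun h => hab (by rw [h]))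


lemma exists_partition_of_le {G : SimpleGraph V} [Fintype V] :
    ∀ (n : ℕ) (H : SimpleGraph V), (G.edgeSet \ H.edgeSet).ncard = n → H ≤ G →
    ∀ {k : ℕ} {P : Fin k → Set (Sym2 V)}, IsCompleteForestPartition H k P →
    ∃ (k' : ℕ) (P' : Fin k' → Set (Sym2 V)), k ≤ k' ∧
      IsCompleteForestPartition G k' P' := by
  intro n
  induction n using Nat.strong_induction_on with
  | _ n ih =>
    intro H hn hHG k P hP
    rcases Set.eq_empty_or_nonempty (G.edgeSet \ H.edgeSet) with hE | ⟨e, he⟩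
    · have hHG' : H = G := by
        apply SimpleGraph.edgeSet_inj.1
        apply le_antisymm (SimpleGraph.edgeSet_mono hHG)
        exact Set.diff_eq_empty.1 hE
      exact ⟨k, P, le_rfl, hHG' ▸ hP⟩
    · have hd : ¬ e.IsDiag := G.not_isDiag_of_mem_edgeSet he.1
      obtain ⟨k', P', hk', hP'⟩ := step hP he.2 hd
      set H' := H ⊔ SimpleGraph.fromEdgeSet {e} with hH'
      have hH'G : H' ≤ G := by
        refine sup_le hHG ?_
        calc SimpleGraph.fromEdgeSet {e} ≤ SimpleGraph.fromEdgeSet G.edgeSet :=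
              SimpleGraph.fromEdgeSet_mono (Set.singleton_subset_iff.2 he.1)
          _ = G := SimpleGraph.fromEdgeSet_edgeSet G
      have hedge : H'.edgeSet = H.edgeSet ∪ {e} := by
        rw [hH', SimpleGraph.edgeSet_sup, SimpleGraph.edgeSet_fromEdgeSet]
        congr 1
        ext x
        simp only [Set.mem_diff, Set.mem_singleton_iff, Set.mem_setOf_eq]
        exact ⟨fun h => h.1, fun h => ⟨h, h ▸ hd⟩⟩
      have hlt : (G.edgeSet \ H'.edgeSet).ncard < n := by
        rw [← hn]
        apply Set.ncard_lt_ncard _ (G.edgeSet \ H.edgeSet).toFinite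
        constructor
        · rw [hedge]
          intro x hx
          exact ⟨hx.1, fun h => hx.2 (Or.inl h)⟩
        · intro hsub
          have := hsub he
          rw [hedge] at this
          exact this.2 (Or.inr rfl)
      obtain ⟨k'', P'', hk'', hP''⟩ := ih _ hlt H' rfl hH'G hP'
      exact ⟨k'', P'', hk'.trans hk'', hP''⟩

lemma bddAbove_partition_set (G : SimpleGraph V) [Fintype V] :
    BddAbove {k | ∃ P : Fin k → Set (Sym2 V), IsCompleteForestPartition G k P} := by
  refine ⟨Nat.card (Sym2 V), ?_⟩
  rintro k ⟨P, hne, hdisj, -, -, -⟩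
  have : Function.Injective (fun i => (hne i).choose) := by
    intro i j hij
    by_contra hne'
    have h1 := (hne i).choose_spec
    have h2 := (hne j).choose_spec
    have hij' : (hne i).choose = (hne j).choose := hij
    rw [hij'] at h1
    exact Set.disjoint_left.1 (hdisj i j hne') h1 h2
  calc k = Nat.card (Fin k) := by simp
    _ ≤ Nat.card (Sym2 V) := Nat.card_le_card_of_injective _ this

end Aux


/-- If `H` is a subgraph of `G` then the achromatic arboricity of `G`
is at least that of `H`. -/
theorem achromaticArboricity_mono {V : Type*} [Fintype V] (G H : SimpleGraph V)
    (hHG : H ≤ G) :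
    achromaticArboricity H ≤ achromaticArboricity G := by
  unfold achromaticArboricity
  rcases Set.eq_empty_or_nonempty
      {k | ∃ P : Fin k → Set (Sym2 V), IsCompleteForestPartition H k P} with hE | hne
  · rw [hE, csSup_empty]
    exact Nat.zero_le _
  · refine csSup_le hne ?_
    rintro k ⟨P, hP⟩
    obtain ⟨k', P', hk', hP'⟩ := exists_partition_of_le _ H rfl hHG hP
    exact hk'.trans (le_csSup (bddAbove_partition_set G) ⟨P', hP'⟩)
end

section
/- For every integer n ≥ 5, the achromatic arboricity of the complete graph satisfies A_α(K_n) ≤ (1/√2)·n^{3/2}, i.e., A_α(K_n) ≤ n^{3/2}/√2. -/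
/-!
Let `A` be a smallest part of a complete forest partition of `G` into `k` parts, with `t`
edges, and let `S` be its vertex set, so `|S| ≤ 2t`. For every other part `B`, a cycle of the
non-forest `A ∪ B` must switch from `A` to `B` and back, so `B` has at least two edge-vertex
incidences with `S`. Summing over the `k - 1` other parts gives
`2(k - 1) ≤ ∑_{v ∈ S} deg v ≤ 2tΔ`, while `kt ≤ |E|`; hence `k² ≤ |E|(Δ + 1)`, which for `K_n`
is `n²(n - 1)/2`.
-/
open Finset SimpleGraph

theorem Cycle.Chain.imp_of_mem {α : Type*} {r₁ r₂ : α → α → Prop} {s : Cycle α}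
    (H : ∀ a ∈ s, ∀ b ∈ s, r₁ a b → r₂ a b) (hs : s.Chain r₁) : s.Chain r₂ := by
  induction s with
  | nil => exact Cycle.Chain.nil r₂
  | cons a l =>
    rw [Cycle.chain_coe_cons] at hs ⊢
    exact hs.imp_of_mem_imp fun x y hx hy =>
      H x (by simp at hx ⊢; tauto) y (by simp at hy ⊢; tauto)

theorem Cycle.Chain.exists_rel_of_not_forall {α : Type*} {r : α → α → Prop} {s : Cycle α}
    (hs : s.Chain r) {p : α → Prop} (hx : ∃ x ∈ s, p x) (hy : ∃ y ∈ s, ¬ p y) :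
    ∃ a ∈ s, ∃ b ∈ s, r a b ∧ p a ∧ ¬ p b := by
  by_contra! h
  have : IsTrans α (fun a b => p a → p b) := ⟨fun _ _ _ h₁ h₂ => h₂ ∘ h₁⟩
  obtain ⟨x, hx, hpx⟩ := hx
  obtain ⟨y, hy, hpy⟩ := hy
  exact hpy (Cycle.chain_iff_pairwise.mp (hs.imp_of_mem h) x hx y hy hpx)

namespace SimpleGraph

variable {V : Type*} {G : SimpleGraph V} {u : V}

theorem Walk.cycleChain_dartAdj_darts (c : G.Walk u u) :
    Cycle.Chain G.DartAdj (c.darts : Cycle G.Dart) := by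
  cases c with
  | nil => exact Cycle.Chain.nil _
  | cons h p => simpa using ((cons h p).concat h).isChain_dartAdj_darts

theorem Walk.exists_boundary_dartAdj (c : G.Walk u u) {p : G.Dart → Prop}
    (hx : ∃ x ∈ c.darts, p x) (hy : ∃ y ∈ c.darts, ¬ p y) :
    ∃ a ∈ c.darts, ∃ b ∈ c.darts, a.snd = b.fst ∧ p a ∧ ¬ p b := by
  simp only [← Cycle.mem_coe_iff] at hx hy ⊢
  exact c.cycleChain_dartAdj_darts.exists_rel_of_not_forall hx hy

theorem Walk.IsCycle.not_isAcyclic_fromEdgeSet {c : G.Walk u u} (hc : c.IsCycle)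
    {s : Set (Sym2 V)} (hs : ∀ e ∈ c.edges, e ∈ s) : ¬ (fromEdgeSet s).IsAcyclic :=
  fun h => h _ <| hc.transfer fun e he => by
    rw [edgeSet_fromEdgeSet]
    exact ⟨hs e he, G.not_isDiag_of_mem_edgeSet (c.edges_subset_edgeSet he)⟩

end SimpleGraph

section Incidences

variable {V : Type*} [DecidableEq V]

def incidences (B : Finset (Sym2 V)) (S : Finset V) : Finset (Sym2 V × V) :=
  {x ∈ B ×ˢ S | x.2 ∈ x.1}

theorem two_le_card_incidences {A B : Finset (Sym2 V)}
    (hA : (fromEdgeSet (A : Set (Sym2 V))).IsAcyclic)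
    (hB : (fromEdgeSet (B : Set (Sym2 V))).IsAcyclic)
    (hAB : ¬ (fromEdgeSet (A ∪ B : Set (Sym2 V))).IsAcyclic)
    {S : Finset V} (hS : ∀ e ∈ A, ∀ v ∈ e, v ∈ S) : 2 ≤ #(incidences B S) := by
  simp only [IsAcyclic, not_forall, not_not] at hAB
  obtain ⟨u, c, hc⟩ := hAB
  have hdart (d : (fromEdgeSet (A ∪ B : Set (Sym2 V))).Dart) : d.edge ∈ A ∨ d.edge ∈ B := by
    simpa using (edgeSet_fromEdgeSet _ ▸ d.edge_mem).1
  have hedges {s : Set (Sym2 V)} (h : ∀ d ∈ c.darts, d.edge ∈ s) :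
      ∀ e ∈ c.edges, e ∈ s := by
    simpa [Walk.edges] using h
  have hB_mem : ∃ d ∈ c.darts, d.edge ∈ B := by
    by_contra! h
    exact hc.not_isAcyclic_fromEdgeSet (hedges fun d hd => (hdart d).resolve_right (h d hd)) hA
  have hB_not_mem : ∃ d ∈ c.darts, d.edge ∉ B := by
    by_contra! h
    exact hc.not_isAcyclic_fromEdgeSet (hedges h) hB
  -- a `B`-dart entering `S` and a `B`-dart leaving `S`
  obtain ⟨a, ha, b, -, hab, haB, hbB⟩ := c.exists_boundary_dartAdj hB_mem hB_not_mem
  obtain ⟨a', ha', b', -, hab', ha'B, hb'B⟩ :=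
    c.exists_boundary_dartAdj hB_not_mem (by simpa using hB_mem)
  rw [not_not] at hb'B
  have hin : (a.edge, a.snd) ∈ incidences B S := by
    simp only [incidences, mem_filter, mem_product]
    exact ⟨⟨haB, hS _ ((hdart b).resolve_right hbB) _ (hab ▸ Sym2.mem_mk_left _ _)⟩,
      Sym2.mem_mk_right _ _⟩
  have hout : (b'.edge, b'.fst) ∈ incidences B S := by
    simp only [incidences, mem_filter, mem_product]
    exact ⟨⟨hb'B, hS _ ((hdart a').resolve_right ha'B) _ (hab' ▸ Sym2.mem_mk_right _ _)⟩,
      Sym2.mem_mk_left _ _⟩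
  refine one_lt_card.mpr ⟨_, hin, _, hout, fun h => ?_⟩
  -- the two incidences coincide only if `a` and `a'` end at the same vertex of the cycle
  have hnodup : (c.darts.map (·.snd)).Nodup := c.map_snd_darts ▸ hc.support_nodup
  have : a = a' := List.inj_on_of_nodup_map hnodup ha ha' ((Prod.ext_iff.mp h).2.trans hab'.symm)
  exact ha'B (this ▸ haB)

theorem incidences_biUnion {ι : Type*} (s : Finset ι) (Q : ι → Finset (Sym2 V))
    (S : Finset V) :
    incidences (s.biUnion Q) S = s.biUnion fun i => incidences (Q i) S := by
  ext
  simp only [incidences, mem_filter, mem_product, mem_biUnion]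
  tauto

theorem card_incidences_biUnion {ι : Type*} {s : Finset ι} {Q : ι → Finset (Sym2 V)}
    (hQ : (s : Set ι).PairwiseDisjoint Q) (S : Finset V) :
    #(incidences (s.biUnion Q) S) = ∑ i ∈ s, #(incidences (Q i) S) := by
  rw [incidences_biUnion, card_biUnion]
  exact fun i hi j hj hij => disjoint_filter_filter (disjoint_product.mpr (.inl (hQ hi hj hij)))

theorem card_incidences_edgeFinset_le [Fintype V] (G : SimpleGraph V) [DecidableRel G.Adj]
    (S : Finset V) : #(incidences G.edgeFinset S) ≤ #S * G.maxDegree := by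
  have hdeg (v : V) : #{e ∈ G.edgeFinset | v ∈ e} = G.degree v := by
    rw [← incidenceFinset_eq_filter, card_incidenceFinset_eq_degree]
  calc #(incidences G.edgeFinset S) = ∑ v ∈ S, G.degree v := by
        simp only [incidences, card_filter, sum_product_right, ← hdeg]
    _ ≤ #S * G.maxDegree := sum_le_card_nsmul _ _ _ fun v _ => G.degree_le_maxDegree v

theorem card_biUnion_toFinset_le (A : Finset (Sym2 V)) : #(A.biUnion Sym2.toFinset) ≤ 2 * #A :=
  calc #(A.biUnion Sym2.toFinset) ≤ ∑ e ∈ A, #e.toFinset := card_biUnion_le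
    _ ≤ ∑ _e ∈ A, 2 := sum_le_sum fun e _ => by rw [Sym2.card_toFinset]; split_ifs <;> omega
    _ = 2 * #A := by rw [sum_const, smul_eq_mul, mul_comm]

theorem IsCompleteForestPartition.sq_le [Fintype V] {G : SimpleGraph V} [DecidableRel G.Adj]
    {k : ℕ} {P : Fin k → Set (Sym2 V)} (hP : IsCompleteForestPartition G k P) :
    k ^ 2 ≤ #G.edgeFinset * (G.maxDegree + 1) := by
  classical
  obtain ⟨hne, hdisj, hunion, hacyc, hcyc⟩ := hP
  rcases k.eq_zero_or_pos with rfl | hk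
  · simp
  set Q : Fin k → Finset (Sym2 V) := fun i => (P i).toFinset
  have hQ (i : Fin k) : (Q i : Set (Sym2 V)) = P i := Set.coe_toFinset _
  have hE : G.edgeFinset = univ.biUnion Q := by
    ext e
    simp [Q, ← hunion]
  have hQdisj : ((univ : Finset (Fin k)) : Set (Fin k)).PairwiseDisjoint Q :=
    fun i _ j _ hij => by simpa [Q] using hdisj i j hij
  obtain ⟨i₀, -, hmin⟩ :=
    exists_min_image univ (fun i => #(Q i)) (univ_nonempty_iff.mpr ⟨⟨0, hk⟩⟩)
  set t := #(Q i₀)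
  set Δ := G.maxDegree
  have ht : 0 < t := card_pos.mpr (by simpa [Q] using hne i₀)
  have hkt : k * t ≤ #G.edgeFinset :=
    calc k * t = ∑ _i : Fin k, t := by simp
      _ ≤ ∑ i, #(Q i) := sum_le_sum fun i _ => hmin i (mem_univ i)
      _ = #G.edgeFinset := by rw [hE, card_biUnion hQdisj]
  set S := (Q i₀).biUnion Sym2.toFinset
  have hS : ∀ e ∈ Q i₀, ∀ v ∈ e, v ∈ S := fun e he v hv =>
    mem_biUnion.mpr ⟨e, he, Sym2.mem_toFinset.mpr hv⟩
  have hkΔ : 2 * (k - 1) ≤ 2 * (t * Δ) :=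
    calc 2 * (k - 1) = ∑ _j ∈ univ.erase i₀, 2 := by simp [card_erase_of_mem, mul_comm]
      _ ≤ ∑ j ∈ univ.erase i₀, #(incidences (Q j) S) := sum_le_sum fun j hj => by
          have hj := (ne_of_mem_erase hj).symm
          exact two_le_card_incidences (by rw [hQ]; exact hacyc i₀) (by rw [hQ]; exact hacyc j)
            (by rw [hQ, hQ]; exact hcyc i₀ j hj) hS
      _ ≤ ∑ j, #(incidences (Q j) S) := sum_le_sum_of_subset (erase_subset _ _)
      _ = #(incidences G.edgeFinset S) := by rw [hE, card_incidences_biUnion hQdisj]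
      _ ≤ #S * Δ := card_incidences_edgeFinset_le G S
      _ ≤ 2 * t * Δ := Nat.mul_le_mul_right _ (card_biUnion_toFinset_le _)
      _ = 2 * (t * Δ) := mul_assoc ..
  calc k ^ 2 ≤ k * (t * Δ + t) := by rw [sq]; exact Nat.mul_le_mul_left k (by omega)
    _ = k * t * (Δ + 1) := by ring
    _ ≤ #G.edgeFinset * (Δ + 1) := Nat.mul_le_mul_right _ hkt

theorem achromaticArboricity_sq_le [Fintype V] (G : SimpleGraph V) [DecidableRel G.Adj] :
    achromaticArboricity G ^ 2 ≤ #G.edgeFinset * (G.maxDegree + 1) := by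
  have : achromaticArboricity G ≤ Nat.sqrt (#G.edgeFinset * (G.maxDegree + 1)) :=
    csSup_le' fun _ ⟨_, hP⟩ => Nat.le_sqrt'.mpr hP.sq_le
  exact (Nat.pow_le_pow_left this 2).trans (Nat.sqrt_le' _)

end Incidences

theorem two_mul_achromaticArboricity_top_sq_le (n : ℕ) :
    2 * achromaticArboricity (⊤ : SimpleGraph (Fin n)) ^ 2 ≤ n ^ 3 := by
  have h := achromaticArboricity_sq_le (⊤ : SimpleGraph (Fin n))
  rw [card_edgeFinset_top_eq_card_choose_two, maxDegree_top, Fintype.card_fin] at h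
  rcases n with _ | n
  · simpa using h
  · have hchoose : 2 * (n + 1).choose 2 = (n + 1) * n := by
      rw [Nat.choose_two_right, Nat.add_sub_cancel]
      exact Nat.mul_div_cancel' (Nat.even_mul_pred_self (n + 1)).two_dvd
    calc 2 * _ ≤ 2 * ((n + 1).choose 2 * (n + 1)) := by simpa using Nat.mul_le_mul_left 2 h
      _ = (n + 1) * n * (n + 1) := by rw [← mul_assoc, hchoose]
      _ ≤ (n + 1) ^ 3 := by nlinarith

theorem achromaticArboricity_upper_bound_general (n : ℕ) :
    (achromaticArboricity (⊤ : SimpleGraph (Fin n)) : ℝ) ≤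
      (n : ℝ) ^ ((3 : ℝ) / 2) / Real.sqrt 2 := by
  have h : 2 * (achromaticArboricity (⊤ : SimpleGraph (Fin n)) : ℝ) ^ 2 ≤ (n : ℝ) ^ 3 := by
    exact_mod_cast two_mul_achromaticArboricity_top_sq_le n
  have hpow : ((n : ℝ) ^ ((3 : ℝ) / 2)) ^ 2 = (n : ℝ) ^ 3 := by
    rw [← Real.rpow_natCast, ← Real.rpow_mul n.cast_nonneg]
    norm_num
  rw [le_div_iff₀ (by positivity), ← pow_le_pow_iff_left₀ (by positivity) (by positivity)
    two_ne_zero, mul_pow, Real.sq_sqrt zero_le_two, hpow]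
  linarith

/-- For every integer `n ≥ 5`, the achromatic arboricity of `K_n` is
at most `n^{3/2}/√2`. -/
theorem achromaticArboricity_upper_bound (n : ℕ) (hn : 5 ≤ n) :
    (achromaticArboricity (⊤ : SimpleGraph (Fin n)) : ℝ) ≤
      (n : ℝ) ^ ((3 : ℝ) / 2) / Real.sqrt 2 :=
  achromaticArboricity_upper_bound_general n
end

section
/- For every integer n ≥ 5 and every positive integer x, min{ n(n−1)/(2x), x·n − x² − x + 1 } ≤ (1/√2)·n^{3/2}. -/
/-- For every integer `n ≥ 5` and every positive integer `x`,
`min{n(n−1)/(2x), xn − x² − x + 1} ≤ n^{3/2}/√2`. -/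
theorem min_f_g_le (n x : ℕ) (hn : 5 ≤ n) (hx : 0 < x) :
    min ((n * (n - 1) : ℝ) / (2 * x))
        ((x : ℝ) * n - (x : ℝ) ^ 2 - x + 1) ≤
      (n : ℝ) ^ ((3 : ℝ) / 2) / Real.sqrt 2 := by
  have hn0 : (0:ℝ) < n := by positivity
  have hn5 : (5:ℝ) ≤ n := by exact_mod_cast hn
  have hx1 : (1:ℝ) ≤ x := by exact_mod_cast hx
  have hxpos : (0:ℝ) < x := by linarith
  have hsn : Real.sqrt n ^ 2 = n := Real.sq_sqrt hn0.le
  have hs2 : Real.sqrt 2 ^ 2 = 2 := Real.sq_sqrt (by norm_num)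
  have hsnpos : 0 < Real.sqrt n := Real.sqrt_pos.mpr hn0
  have hs2pos : 0 < Real.sqrt 2 := Real.sqrt_pos.mpr (by norm_num)
  have hrhs : (n : ℝ) ^ ((3 : ℝ) / 2) / Real.sqrt 2
      = (n : ℝ) * Real.sqrt n / Real.sqrt 2 := by
    rw [show (3:ℝ)/2 = 1 + 1/2 by norm_num, Real.rpow_add hn0, Real.rpow_one,
      ← Real.sqrt_eq_rpow]
  rw [hrhs]
  rcases le_total ((x:ℝ) * Real.sqrt 2) (Real.sqrt n) with h | h
  · -- x ≤ √(n/2): use g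
    refine (min_le_right _ _).trans ?_
    rw [le_div_iff₀ hs2pos]
    nlinarith [mul_le_mul_of_nonneg_left h hn0.le, sq_nonneg ((x:ℝ) - 1),
      mul_pos hxpos hs2pos]
  · -- √(n/2) ≤ x·√2 ... use f
    refine (min_le_left _ _).trans ?_
    rw [div_le_div_iff₀ (by positivity) hs2pos]
    have h2 : Real.sqrt n ≤ (x:ℝ) * Real.sqrt 2 := h
    -- goal: n(n-1)·√2 ≤ n·√n·(2x)
    have key : (n:ℝ) * Real.sqrt n * Real.sqrt n = (n:ℝ) * (n:ℝ) := by
      nlinarith [hsn]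
    nlinarith [mul_le_mul_of_nonneg_left h2 (mul_pos hn0 hsnpos).le,
      mul_pos hxpos hn0, hsn, hs2]
end

section
/- For every even integer m ≥ 2, the complete graph K_m admits a decomposition of its edge set into m/2 Hamiltonian paths. -/
/-!
Walecki's construction. Identify the vertices of `K_{2n}` with `ZMod (2n)` and let `z` be the
zigzag `0, 1, -1, 2, -2, …, n - 1, -(n - 1), n`. For `i < n` the `i`-th path visits
`i + z 0, i + z 1, …, i + z (2n - 1)`; these are distinct because `z` takes its values in the
window `(-n, n]` of length `2n`. The endpoints of the edge `{i + z j, i + z (j + 1)}` sum to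
`2i + [j even]`, which recovers `i` and the parity of `j`; the endpoints themselves then determine
`{j, j + 1}`, hence `j`. So the `n` paths have `n (2n - 1) = (2n choose 2)` distinct edges, which
must be all edges of `K_{2n}`.
-/

open SimpleGraph

section CompleteGraph

variable {V : Type*}

theorem exists_walk_top_of_injOn (f : ℕ → V) (k : ℕ) (hf : Set.InjOn f (Set.Iic k)) :
    ∃ w : (⊤ : SimpleGraph V).Walk (f 0) (f k),
      w.support = (List.range (k + 1)).map f ∧
      w.edges = (List.range k).map fun j ↦ s(f j, f (j + 1)) := by
  induction k with
  | zero => exact ⟨.nil, by simp, by simp⟩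
  | succ k ih =>
    obtain ⟨w, hsupport, hedges⟩ := ih (hf.mono (Set.Iic_subset_Iic.mpr k.le_succ))
    have hadj : (⊤ : SimpleGraph V).Adj (f k) (f (k + 1)) :=
      (top_adj _ _).mpr fun h ↦ k.succ_ne_self (hf (by simp) (by simp) h).symm
    refine ⟨w.concat hadj, ?_, ?_⟩
    · rw [Walk.support_concat, hsupport]
      simp [List.range_succ]
    · rw [Walk.edges_concat, hedges]
      simp [List.range_succ]

theorem exists_isHamiltonian_top_of_injOn [Fintype V] [DecidableEq V] (f : ℕ → V)
    (hf : Set.InjOn f (Set.Iio (Fintype.card V))) :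
    ∃ (a b : V) (w : (⊤ : SimpleGraph V).Walk a b), w.IsHamiltonian ∧
      w.edges = (List.range (Fintype.card V - 1)).map fun j ↦ s(f j, f (j + 1)) := by
  have : Nonempty V := ⟨f 0⟩
  have hcard : Fintype.card V - 1 + 1 = Fintype.card V :=
    Nat.sub_one_add_one Fintype.card_ne_zero
  obtain ⟨w, hsupport, hedges⟩ := exists_walk_top_of_injOn f (Fintype.card V - 1)
    (hf.mono fun j hj ↦ by simp only [Set.mem_Iic, Set.mem_Iio] at hj ⊢; omega)
  refine ⟨_, _, w, Walk.isHamiltonian_iff_isPath_and_length_eq.mpr ⟨?_, ?_⟩, hedges⟩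
  · rw [Walk.isPath_def, hsupport, hcard]
    exact List.nodup_range.map_on fun a ha b hb ↦ hf (by simpa using ha) (by simpa using hb)
  · rw [← Walk.length_edges, hedges, List.length_map, List.length_range]

theorem image_eq_edgeSet_top_of_injOn [Fintype V] {α : Type*} (E : α → Sym2 V) (s : Finset α)
    (hE : Set.InjOn E s) (hdiag : ∀ a ∈ s, ¬ (E a).IsDiag)
    (hcard : (Fintype.card V).choose 2 ≤ s.card) :
    E '' s = (⊤ : SimpleGraph V).edgeSet := by
  classical
  have hsub : s.image E ⊆ (⊤ : SimpleGraph V).edgeFinset := by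
    simpa [Finset.subset_iff] using hdiag
  have := Finset.eq_of_subset_of_card_le hsub (by
    rw [card_edgeFinset_top_eq_card_choose_two, Finset.card_image_of_injOn hE]; exact hcard)
  rw [← Finset.coe_image, this, coe_edgeFinset]

theorem exists_isHamiltonian_decomposition_top [Fintype V] [DecidableEq V] {ι : Type*}
    [Fintype ι] (f : ι → ℕ → V) (hf : ∀ i, Set.InjOn (f i) (Set.Iio (Fintype.card V)))
    (hedge : Set.InjOn (fun p : ι × ℕ ↦ s(f p.1 p.2, f p.1 (p.2 + 1)))
      (Set.univ ×ˢ Set.Iio (Fintype.card V - 1)))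
    (hcard : Fintype.card ι * (Fintype.card V - 1) = (Fintype.card V).choose 2) :
    ∃ P : ι → Set (Sym2 V),
      (∀ i j, i ≠ j → Disjoint (P i) (P j)) ∧
      (⋃ i, P i) = (⊤ : SimpleGraph V).edgeSet ∧
      (∀ i, ∃ (a b : V) (w : (⊤ : SimpleGraph V).Walk a b),
        w.IsPath ∧ w.IsHamiltonian ∧ P i = {e | e ∈ w.edges}) := by
  set L := Fintype.card V - 1 with hL
  set E := fun p : ι × ℕ ↦ s(f p.1 p.2, f p.1 (p.2 + 1))
  choose a b w hw hedges using fun i ↦ exists_isHamiltonian_top_of_injOn (f i) (hf i)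
  have hmem (i : ι) (x : Sym2 V) : x ∈ (w i).edges ↔ ∃ j < L, E (i, j) = x := by
    simp [hedges, E, L]
  refine ⟨fun i ↦ {x | x ∈ (w i).edges}, ?_, ?_,
    fun i ↦ ⟨_, _, w i, (hw i).isPath, hw i, rfl⟩⟩
  · intro i i' hii'
    refine Set.disjoint_left.mpr fun x hx hx' ↦ hii' ?_
    obtain ⟨j, hj, rfl⟩ := (hmem i x).mp hx
    obtain ⟨j', hj', hjj'⟩ := (hmem i' _).mp hx'
    exact congrArg Prod.fst
      (hedge (Set.mk_mem_prod trivial hj') (Set.mk_mem_prod trivial hj) hjj').symm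
  · have hunion : ⋃ i, {x | x ∈ (w i).edges} =
        E '' ↑(Finset.univ ×ˢ Finset.range L : Finset (ι × ℕ)) := by
      ext x
      simp [hmem]
    rw [hunion]
    refine image_eq_edgeSet_top_of_injOn E _ (by simpa using hedge) (fun p hp ↦ ?_) ?_
    · simp only [Finset.mem_product, Finset.mem_range] at hp
      rw [Sym2.mk_isDiag_iff]
      intro h
      have := hf p.1 (show p.2 < Fintype.card V by omega)
        (show p.2 + 1 < Fintype.card V by omega) h
      omega
    · simpa using hcard.ge

end CompleteGraph

theorem ZMod.intCast_injOn_Ioc (N : ℕ) {a b : ℤ} (hab : b ≤ a + N) :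
    Set.InjOn (Int.cast : ℤ → ZMod N) (Set.Ioc a b) := by
  rintro x ⟨hax, hxb⟩ y ⟨hay, hyb⟩ h
  rw [ZMod.intCast_eq_intCast_iff_dvd_sub] at h
  have := Int.eq_zero_of_abs_lt_dvd h (abs_lt.mpr ⟨by omega, by omega⟩)
  omega

def zigzag (j : ℕ) : ℤ := if j % 2 = 0 then -(j / 2 : ℕ) else ((j + 1) / 2 : ℕ)

theorem zigzag_injective : Function.Injective zigzag := by
  intro a b h
  unfold zigzag at h
  split_ifs at h <;> omega

theorem zigzag_mem_Ioc {n j : ℕ} (hj : j < 2 * n) : zigzag j ∈ Set.Ioc (-n : ℤ) n := by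
  unfold zigzag
  split_ifs <;> constructor <;> omega

theorem zigzag_add_zigzag_succ (j : ℕ) : zigzag j + zigzag (j + 1) = ((j + 1) % 2 : ℕ) := by
  unfold zigzag
  split_ifs <;> omega

def walecki (n i j : ℕ) : ZMod (2 * n) := i + zigzag j

theorem walecki_injOn (n i : ℕ) : Set.InjOn (walecki n i) (Set.Iio (2 * n)) := by
  intro a ha b hb h
  exact zigzag_injective (ZMod.intCast_injOn_Ioc (2 * n) (a := -n) (b := n) (by omega)
    (zigzag_mem_Ioc ha) (zigzag_mem_Ioc hb) (add_left_cancel h))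

theorem walecki_add_walecki_succ (n i j : ℕ) :
    walecki n i j + walecki n i (j + 1) = ((2 * i + (j + 1) % 2 : ℕ) : ZMod (2 * n)) := by
  have h := congrArg (Int.cast : ℤ → ZMod (2 * n)) (zigzag_add_zigzag_succ j)
  rw [Int.cast_add, Int.cast_natCast] at h
  rw [walecki, walecki, Nat.cast_add, ← h]
  push_cast
  ring

theorem walecki_edge_injOn (n : ℕ) :
    Set.InjOn (fun p : ℕ × ℕ ↦ s(walecki n p.1 p.2, walecki n p.1 (p.2 + 1)))
      (Set.Iio n ×ˢ Set.Iio (2 * n - 1)) := by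
  rintro ⟨i, j⟩ ⟨hi, hj⟩ ⟨i', j'⟩ ⟨hi', hj'⟩ h
  simp only [Set.mem_Iio] at hi hj hi' hj' h
  have hsum := congrArg (Sym2.lift ⟨(· + ·), add_comm⟩) h
  simp only [Sym2.lift_mk, walecki_add_walecki_succ] at hsum
  have hval := congrArg ZMod.val hsum
  rw [ZMod.val_natCast_of_lt (by omega), ZMod.val_natCast_of_lt (by omega)] at hval
  obtain ⟨rfl, hparity⟩ : i = i' ∧ (j + 1) % 2 = (j' + 1) % 2 := by omega
  refine Prod.ext rfl ?_
  rcases Sym2.eq_iff.mp h with ⟨h1, -⟩ | ⟨h1, -⟩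
  · exact walecki_injOn n i (show j < 2 * n by omega) (show j' < 2 * n by omega) h1
  · have := walecki_injOn n i (show j < 2 * n by omega) (show j' + 1 < 2 * n by omega) h1
    omega

/-- For every even `m ≥ 2`, the edge set of `K_m` decomposes into
`m/2` Hamiltonian paths. -/
theorem completeGraph_hamiltonian_path_decomposition (m : ℕ) (hm : 2 ≤ m) (hme : Even m) :
    ∃ P : Fin (m / 2) → Set (Sym2 (Fin m)),
      (∀ i j, i ≠ j → Disjoint (P i) (P j)) ∧
      (⋃ i, P i) = (⊤ : SimpleGraph (Fin m)).edgeSet ∧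
      (∀ i, ∃ (a b : Fin m) (w : (⊤ : SimpleGraph (Fin m)).Walk a b),
        w.IsPath ∧ w.IsHamiltonian ∧ P i = {e | e ∈ w.edges}) := by
  obtain ⟨n, rfl⟩ := hme.two_dvd
  rw [show 2 * n / 2 = n by omega]
  have : NeZero (2 * n) := ⟨by omega⟩
  let e := (ZMod.finEquiv (2 * n)).symm
  refine exists_isHamiltonian_decomposition_top (fun i ↦ e ∘ walecki n i)
    (fun i ↦ ?_) ?_ ?_
  · rw [Fintype.card_fin]
    exact e.injective.comp_injOn (walecki_injOn n i)
  · rintro ⟨i, j⟩ ⟨-, hj⟩ ⟨i', j'⟩ ⟨-, hj'⟩ h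
    rw [Fintype.card_fin] at hj hj'
    have := walecki_edge_injOn n (Set.mk_mem_prod i.isLt hj) (Set.mk_mem_prod i'.isLt hj')
      (Sym2.map.injective e.injective h)
    simp only [Prod.mk.injEq] at this
    exact Prod.ext (Fin.ext this.1) this.2
  · rw [Fintype.card_fin, Fintype.card_fin, Nat.choose_two_right, mul_assoc,
      Nat.mul_div_cancel_left _ two_pos]
end

section
/- Let a partition of E(K_n) into color classes be given where every class is a forest and the union of any two classes contains a cycle, and suppose some class M is a perfect matching of size x on a set S of 2x vertices. Then the number of classes other than M is at most x(n−2x) + x(x−1), so the total number of classes is at most x·n − x² − x + 1. -/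
/-!
Let `S` be the set of `2x` vertices covered by the matching class `M`. A cycle in `M ∪ B`, for
another class `B`, must use an edge `uw` of `M`, and since `M` is a matching it leaves `u` and `w`
along two distinct edges of `B`, both meeting `S`. The classes are disjoint, so twice the number
of classes other than `M` is at most the number of edges of `K_n` meeting `S` and not in `M`,
which is `2x(n - 2x) + C(2x, 2) - x = 2x(n - 2x) + 2x(x - 1)`.
-/

open SimpleGraph Finset

variable {V : Type*}

lemma SimpleGraph.Walk.IsCycle.exists_mem_edges_ne {G : SimpleGraph V} {v u w : V}
    {c : G.Walk v v} (hc : c.IsCycle) (he : s(u, w) ∈ c.edges) :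
    ∃ w', w' ≠ w ∧ s(u, w') ∈ c.edges := by
  have htwo := hc.ncard_neighborSet_toSubgraph_eq_two (c.fst_mem_support_of_mem_edges he)
  obtain ⟨w', hw', hne⟩ :=
    Set.exists_ne_of_one_lt_ncard (s := c.toSubgraph.neighborSet u) (by omega) w
  exact ⟨w', hne, c.mem_edges_toSubgraph.1 hw'⟩

lemma SimpleGraph.Walk.IsCycle.exists_mem_edges_notMem_of_isAcyclic {A B : Set (Sym2 V)}
    (hB : (fromEdgeSet B).IsAcyclic) {v : V} {c : (fromEdgeSet (A ∪ B)).Walk v v}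
    (hc : c.IsCycle) : ∃ e ∈ c.edges, e ∉ B := by
  by_contra! hsub
  have hcB : ∀ e ∈ c.edges, e ∈ (fromEdgeSet B).edgeSet := by
    intro e he
    have heAB := c.edges_subset_edgeSet he
    rw [edgeSet_fromEdgeSet] at heAB ⊢
    exact ⟨hsub e he, heAB.2⟩
  exact hB _ (hc.transfer hcB)

lemma exists_ne_mem_meeting_of_not_isAcyclic_union {A B : Set (Sym2 V)}
    (hB : (fromEdgeSet B).IsAcyclic) (hAB : ¬(fromEdgeSet (A ∪ B)).IsAcyclic)
    (hA : ∀ e ∈ A, ∀ e' ∈ A, e ≠ e' → ∀ v : V, ¬(v ∈ e ∧ v ∈ e')) :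
    ∃ e₁ ∈ B, ∃ e₂ ∈ B, e₁ ≠ e₂ ∧
      (∃ v ∈ e₁, ∃ f ∈ A, v ∈ f) ∧ (∃ v ∈ e₂, ∃ f ∈ A, v ∈ f) := by
  obtain ⟨v, c, hc⟩ : ∃ v, ∃ c : (fromEdgeSet (A ∪ B)).Walk v v, c.IsCycle := by
    simpa [IsAcyclic] using hAB
  have hcAB : ∀ e ∈ c.edges, e ∈ A ∪ B ∧ ¬e.IsDiag := by
    intro e he
    have heAB := c.edges_subset_edgeSet he
    rwa [edgeSet_fromEdgeSet] at heAB
  obtain ⟨e, he, heB⟩ := hc.exists_mem_edges_notMem_of_isAcyclic hB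
  induction e using Sym2.ind with | _ u w => ?_
  have heA : s(u, w) ∈ A := (hcAB _ he).1.resolve_right heB
  have huw : u ≠ w := fun h => (hcAB _ he).2 (by simp [h])
  have hnext : ∀ {a b : V}, s(a, b) ∈ c.edges → s(a, b) ∈ A →
      ∃ b', b' ≠ b ∧ s(a, b') ∈ B := by
    intro a b hab habA
    obtain ⟨b', hb', hab'⟩ := hc.exists_mem_edges_ne hab
    refine ⟨b', hb', (hcAB _ hab').1.resolve_left fun hab'A => ?_⟩
    exact hA _ hab'A _ habA (fun h => hb' (Sym2.congr_right.1 h)) a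
      ⟨Sym2.mem_mk_left a b', Sym2.mem_mk_left a b⟩
  obtain ⟨u', hu', hu'B⟩ := hnext he heA
  obtain ⟨w', hw', hw'B⟩ := hnext (Sym2.eq_swap ▸ he) (Sym2.eq_swap ▸ heA)
  refine ⟨_, hu'B, _, hw'B, by simp [huw, hu'],
    ⟨u, Sym2.mem_mk_left u u', _, heA, Sym2.mem_mk_left u w⟩,
    ⟨w, Sym2.mem_mk_left w w', _, heA, Sym2.mem_mk_right u w⟩⟩

lemma two_mul_card_le_card_of_pairwiseDisjoint {ι α : Type*} [DecidableEq α] {s : Finset ι}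
    {t : Finset α} {P : ι → Set α} (hP : (s : Set ι).PairwiseDisjoint P)
    (htwo : ∀ i ∈ s, ∃ a ∈ t, ∃ b ∈ t, a ≠ b ∧ a ∈ P i ∧ b ∈ P i) : 2 * #s ≤ #t := by
  classical
  have hdisj : (s : Set ι).PairwiseDisjoint fun i => {a ∈ t | a ∈ P i} := fun i hi j hj hij =>
    disjoint_left.2 fun a ha hb =>
      Set.disjoint_left.1 (hP hi hj hij) (mem_filter.1 ha).2 (mem_filter.1 hb).2
  calc 2 * #s = ∑ _i ∈ s, 2 := by rw [sum_const, smul_eq_mul, mul_comm]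
    _ ≤ ∑ i ∈ s, #{a ∈ t | a ∈ P i} := sum_le_sum fun i hi => by
        obtain ⟨a, ha, b, hb, hab, haP, hbP⟩ := htwo i hi
        exact one_lt_card.2 ⟨a, by simp [ha, haP], b, by simp [hb, hbP], hab⟩
    _ = #(s.biUnion fun i => {a ∈ t | a ∈ P i}) := (card_biUnion hdisj).symm
    _ ≤ #t := card_le_card (biUnion_subset.2 fun _ _ => filter_subset _ _)

section Counting

variable [DecidableEq V]

def edgeSupport (M : Finset (Sym2 V)) : Finset V := M.biUnion Sym2.toFinset

@[simp]
lemma mem_edgeSupport {M : Finset (Sym2 V)} {v : V} :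
    v ∈ edgeSupport M ↔ ∃ e ∈ M, v ∈ e := by
  simp [edgeSupport]

lemma card_edgeSupport {M : Finset (Sym2 V)} (hdiag : ∀ e ∈ M, ¬e.IsDiag)
    (hM : ∀ e ∈ M, ∀ e' ∈ M, e ≠ e' → ∀ v : V, ¬(v ∈ e ∧ v ∈ e')) :
    #(edgeSupport M) = 2 * #M := by
  rw [edgeSupport, card_biUnion,
    sum_congr rfl fun e he => Sym2.card_toFinset_of_not_isDiag e (hdiag e he),
    sum_const, smul_eq_mul, mul_comm]
  intro e he e' he' hne
  exact disjoint_left.2 fun v hv hv' =>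
    hM e he e' he' hne v ⟨Sym2.mem_toFinset.1 hv, Sym2.mem_toFinset.1 hv'⟩

variable [Fintype V]

def edgesMeeting (S : Finset V) : Finset (Sym2 V) := {e | ¬e.IsDiag ∧ ∃ v ∈ e, v ∈ S}

lemma card_edgesMeeting_sdiff_add_card_le (S : Finset V) {M : Finset (Sym2 V)}
    (hM : ∀ e ∈ M, ¬e.IsDiag ∧ ∀ v ∈ e, v ∈ S) :
    #(edgesMeeting S \ M) + #M ≤ #S * #Sᶜ + (#S).choose 2 := by
  set inner := S.offDiag.image (Function.uncurry Sym2.mk)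
  set cross := (S ×ˢ Sᶜ).image (Function.uncurry Sym2.mk)
  have hMinner : M ⊆ inner := by
    intro e he
    induction e using Sym2.ind with | _ a b => ?_
    have hab := hM _ he
    simp only [Sym2.mk_isDiag_iff, Sym2.mem_iff, forall_eq_or_imp, forall_eq] at hab
    exact mem_image.2 ⟨(a, b), mem_offDiag.2 ⟨hab.2.1, hab.2.2, hab.1⟩, rfl⟩
  have hsplit : edgesMeeting S \ M ⊆ cross ∪ (inner \ M) := by
    intro e he
    induction e using Sym2.ind with | _ a b => ?_
    simp only [edgesMeeting, mem_sdiff, mem_filter, mem_univ, true_and, Sym2.mk_isDiag_iff,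
      Sym2.mem_iff, exists_eq_or_imp, exists_eq_left] at he
    obtain ⟨⟨hab, hS⟩, heM⟩ := he
    by_cases haS : a ∈ S <;> by_cases hbS : b ∈ S
    · exact mem_union_right _
        (mem_sdiff.2 ⟨mem_image.2 ⟨(a, b), mem_offDiag.2 ⟨haS, hbS, hab⟩, rfl⟩, heM⟩)
    · exact mem_union_left _
        (mem_image.2 ⟨(a, b), mem_product.2 ⟨haS, mem_compl.2 hbS⟩, rfl⟩)
    · exact mem_union_left _
        (mem_image.2 ⟨(b, a), mem_product.2 ⟨hbS, mem_compl.2 haS⟩, Sym2.eq_swap⟩)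
    · exact (hS.elim haS hbS).elim
  calc #(edgesMeeting S \ M) + #M ≤ #cross + #(inner \ M) + #M := by
        gcongr; exact (card_le_card hsplit).trans (card_union_le _ _)
    _ ≤ #S * #Sᶜ + #inner := by
        rw [add_assoc, card_sdiff_add_card_eq_card hMinner, ← card_product]
        gcongr; exact card_image_le
    _ = #S * #Sᶜ + (#S).choose 2 := by rw [Sym2.card_image_offDiag]

end Counting

lemma IsCompleteForestPartition.not_isDiag {G : SimpleGraph V} {k : ℕ}
    {P : Fin k → Set (Sym2 V)} (hP : IsCompleteForestPartition G k P) {i : Fin k}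
    {e : Sym2 V} (he : e ∈ P i) : ¬e.IsDiag :=
  G.not_isDiag_of_mem_edgeSet (hP.2.2.1 ▸ Set.mem_iUnion_of_mem i he)

lemma IsCompleteForestPartition.two_mul_le_card_edgesMeeting_sdiff [Fintype V] [DecidableEq V]
    {G : SimpleGraph V} {k : ℕ} {P : Fin k → Set (Sym2 V)}
    (hP : IsCompleteForestPartition G k P) {i₀ : Fin k} {M : Finset (Sym2 V)}
    (hMP : ∀ e, e ∈ M ↔ e ∈ P i₀)
    (hM : ∀ e ∈ P i₀, ∀ e' ∈ P i₀, e ≠ e' → ∀ v : V, ¬(v ∈ e ∧ v ∈ e')) :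
    2 * (k - 1) ≤ #(edgesMeeting (edgeSupport M) \ M) := by
  have hmem : ∀ j ≠ i₀, ∀ e ∈ P j, (∃ v ∈ e, ∃ f ∈ P i₀, v ∈ f) →
      e ∈ edgesMeeting (edgeSupport M) \ M := by
    rintro j hj e he ⟨v, hv, f, hf, hvf⟩
    refine mem_sdiff.2 ⟨mem_filter.2 ⟨mem_univ _, hP.not_isDiag he, v, hv, ?_⟩, fun heM => ?_⟩
    · exact mem_edgeSupport.2 ⟨f, (hMP f).2 hf, hvf⟩
    · exact Set.disjoint_left.1 (hP.2.1 i₀ j hj.symm) ((hMP e).1 heM) he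
  obtain ⟨-, hdisj, -, hacyclic, hcyclic⟩ := hP
  have hclasses := two_mul_card_le_card_of_pairwiseDisjoint (s := univ.erase i₀) (P := P)
    (fun i _ j _ hij => hdisj i j hij) fun j hj => by
      have hj : j ≠ i₀ := ne_of_mem_erase hj
      obtain ⟨e₁, h₁, e₂, h₂, hne, hm₁, hm₂⟩ :=
        exists_ne_mem_meeting_of_not_isAcyclic_union (hacyclic j) (hcyclic i₀ j hj.symm) hM
      exact ⟨e₁, hmem j hj e₁ h₁ hm₁, e₂, hmem j hj e₂ h₂ hm₂, hne, h₁, h₂⟩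
  rwa [card_erase_of_mem (mem_univ _), card_univ, Fintype.card_fin] at hclasses

lemma Nat.choose_two_two_mul_add_self (x : ℕ) : (2 * x).choose 2 + x = 2 * x * x := by
  rw [Nat.choose_two_right, mul_assoc, Nat.mul_div_cancel_left _ two_pos]
  rcases x with _ | x
  · rfl
  · rw [show 2 * (x + 1) - 1 = 2 * x + 1 by omega]
    ring

theorem classes_bound_of_matching_class_general (n k x : ℕ)
    (P : Fin k → Set (Sym2 (Fin n)))
    (hP : IsCompleteForestPartition (⊤ : SimpleGraph (Fin n)) k P)
    (i₀ : Fin k) (hx : (P i₀).ncard = x)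
    (hM : ∀ e ∈ P i₀, ∀ e' ∈ P i₀, e ≠ e' → ∀ v : Fin n, ¬(v ∈ e ∧ v ∈ e')) :
    (k : ℤ) - 1 ≤ (x : ℤ) * ((n : ℤ) - 2 * x) + (x : ℤ) * ((x : ℤ) - 1) ∧
    (k : ℤ) ≤ (x : ℤ) * n - (x : ℤ) ^ 2 - x + 1 := by
  set M := (P i₀).toFinite.toFinset
  have hMP : ∀ e, e ∈ M ↔ e ∈ P i₀ := fun e => Set.Finite.mem_toFinset _
  have hMx : #M = x := by rw [← hx, Set.ncard_eq_toFinset_card _ (P i₀).toFinite]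
  have hMdiag : ∀ e ∈ M, ¬e.IsDiag := fun e he => hP.not_isDiag ((hMP e).1 he)
  have hS : #(edgeSupport M) = 2 * x := by
    rw [card_edgeSupport hMdiag fun e he e' he' => hM e ((hMP e).1 he) e' ((hMP e').1 he'), hMx]
  have h2x : 2 * x ≤ n := by simpa [hS] using card_le_univ (edgeSupport M)
  have hclasses := hP.two_mul_le_card_edgesMeeting_sdiff hMP hM
  have hcount := card_edgesMeeting_sdiff_add_card_le (edgeSupport M) (M := M)
    fun e he => ⟨hMdiag e he, fun v hv => mem_edgeSupport.2 ⟨e, he, hv⟩⟩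
  rw [card_compl, Fintype.card_fin, hS, hMx] at hcount
  have hchoose := Nat.choose_two_two_mul_add_self x
  have hk := i₀.pos
  zify [h2x, hk] at hclasses hcount hchoose
  constructor <;> nlinarith

/-- In a complete acyclic partition of the edges of `K_n` into `k`
classes, if some class `M` is a matching of size `x`, then the number of classes
other than `M` is at most `x(n−2x) + x(x−1)`, hence `k ≤ xn − x² − x + 1`. -/
theorem classes_bound_of_matching_class (n k x : ℕ) (hn : 5 ≤ n)
    (P : Fin k → Set (Sym2 (Fin n)))
    (hP : IsCompleteForestPartition (⊤ : SimpleGraph (Fin n)) k P)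
    (i₀ : Fin k) (hx : (P i₀).ncard = x)
    (hM : ∀ e ∈ P i₀, ∀ e' ∈ P i₀, e ≠ e' → ∀ v : Fin n, ¬(v ∈ e ∧ v ∈ e')) :
    (k : ℤ) - 1 ≤ (x : ℤ) * ((n : ℤ) - 2 * x) + (x : ℤ) * ((x : ℤ) - 1) ∧
    (k : ℤ) ≤ (x : ℤ) * n - (x : ℤ) ^ 2 - x + 1 :=
  classes_bound_of_matching_class_general n k x P hP i₀ hx hM
end
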